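/- (Von Neumann's trace inequality) For real m×n matrices A and B with singular values σ_1(A) ≥ … ≥ σ_r(A) and σ_1(B) ≥ … ≥ σ_r(B), where r = min(m,n), one has trace(AᵀB) ≤ Σ_{i=1}^r σ_i(A)σ_i(B). -/

import Mathlib

open Matrix

/-- The singular values of a real `m × n` matrix `X`: the square roots of the
eigenvalues of `XᵀX` (for real matrices `Xᴴ = Xᵀ`). -/
noncomputable def svals {m n : ℕ} (X : Matrix (Fin m) (Fin n) ℝ) : Fin n → ℝ :=
  fun i => Real.sqrt (((by simpa using Matrix.isHermitian_conjTranspose_mul_self X :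
    (Xᵀ * X).IsHermitian)).eigenvalues i)

/-- The singular values arranged in nonincreasing order. -/
noncomputable def svalsSorted {m n : ℕ} (X : Matrix (Fin m) (Fin n) ℝ) : Fin n → ℝ :=
  fun i => svals X (Tuple.sort (fun j => -svals X j) i)

/-!
Diagonalise `AᵀA` and `BᵀB` by orthonormal eigenbases `vᵢ`, `wⱼ`. Then the images `A vᵢ` are
pairwise orthogonal with `‖A vᵢ‖ = σᵢ(A)`, and likewise for `B wⱼ`. Expanding `B vᵢ` in the
basis `w` gives
  `tr(AᵀB) = Σᵢⱼ ⟪vᵢ, wⱼ⟫ ⟪A vᵢ, B wⱼ⟫ = Σᵢⱼ σᵢ(A) σⱼ(B) ⟪vᵢ, wⱼ⟫ ⟪xᵢ, yⱼ⟫`,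
where `xᵢ`, `yⱼ` are the normalised images. By AM-GM each coefficient `⟪vᵢ, wⱼ⟫ ⟪xᵢ, yⱼ⟫` is at
most `(⟪vᵢ, wⱼ⟫² + ⟪xᵢ, yⱼ⟫²) / 2`, and Bessel's inequality makes this a doubly substochastic
matrix. Such a matrix lies entrywise below a doubly stochastic one, so Birkhoff's theorem and the
rearrangement inequality bound the double sum by `Σᵢ σᵢ(A) σᵢ(B)` with both sequences sorted.
-/

open Finset
open scoped RealInnerProductSpace

namespace Matrix

section

variable {R n : Type*} [AddCommMonoid R] [PartialOrder R] [One R] [Fintype n]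

structure IsDoublySubstochastic (Q : Matrix n n R) : Prop where
  nonneg : ∀ i j, 0 ≤ Q i j
  sum_row_le_one : ∀ i, ∑ j, Q i j ≤ 1
  sum_col_le_one : ∀ j, ∑ i, Q i j ≤ 1

theorem IsDoublySubstochastic.submatrix {m : Type*} [Fintype m] {Q : Matrix n n R}
    (hQ : Q.IsDoublySubstochastic) (e₁ e₂ : m ≃ n) : (Q.submatrix e₁ e₂).IsDoublySubstochastic where
  nonneg i j := hQ.nonneg _ _
  sum_row_le_one i := by simpa only [submatrix_apply, e₂.sum_comp] using hQ.sum_row_le_one (e₁ i)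
  sum_col_le_one j := (e₁.sum_comp fun i => Q i (e₂ j)).trans_le (hQ.sum_col_le_one _)

end

variable {R n : Type*} [Field R] [LinearOrder R] [IsStrictOrderedRing R] [Fintype n] [DecidableEq n]

/-- Adding the rank-one matrix `s⁻¹ r cᵀ` built from the row and column defects `r`, `c` (whose
totals are both `s`) fills every row and column sum up to `1`. -/
theorem IsDoublySubstochastic.exists_mem_doublyStochastic_le {Q : Matrix n n R}
    (hQ : Q.IsDoublySubstochastic) : ∃ P ∈ doublyStochastic R n, ∀ i j, Q i j ≤ P i j := by
  set r : n → R := fun i => 1 - ∑ j, Q i j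
  set c : n → R := fun j => 1 - ∑ i, Q i j
  set s := ∑ i, r i
  have hr0 : ∀ i, 0 ≤ r i := fun i => sub_nonneg.2 (hQ.sum_row_le_one i)
  have hc0 : ∀ j, 0 ≤ c j := fun j => sub_nonneg.2 (hQ.sum_col_le_one j)
  have hs0 : 0 ≤ s := sum_nonneg fun i _ => hr0 i
  have hcs : ∑ j, c j = s := by
    simp only [c, s, r, sum_sub_distrib]
    rw [sum_comm]
  have hr : ∀ i, r i * s⁻¹ * s = r i := by
    intro i
    rcases eq_or_ne s 0 with hs | hs
    · simp [(sum_eq_zero_iff_of_nonneg fun i _ => hr0 i).1 hs i]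
    · field_simp
  have hc : ∀ j, s⁻¹ * c j * s = c j := by
    intro j
    rcases eq_or_ne s 0 with hs | hs
    · simp [(sum_eq_zero_iff_of_nonneg fun j _ => hc0 j).1 (hcs.trans hs) j]
    · field_simp
  have hfill : ∀ i j, 0 ≤ s⁻¹ * (r i * c j) := fun i j =>
    mul_nonneg (inv_nonneg.2 hs0) (mul_nonneg (hr0 i) (hc0 j))
  refine ⟨Q + s⁻¹ • vecMulVec r c, ?_, fun i j => ?_⟩
  · rw [mem_doublyStochastic_iff_sum]
    refine ⟨fun i j => add_nonneg (hQ.nonneg i j) (hfill i j), fun i => ?_, fun j => ?_⟩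
    · simp only [add_apply, smul_apply, vecMulVec_apply, smul_eq_mul, sum_add_distrib,
        ← mul_sum, hcs]
      linear_combination hr i
    · simp only [add_apply, smul_apply, vecMulVec_apply, smul_eq_mul, sum_add_distrib,
        ← sum_mul, ← mul_sum]
      linear_combination hc j
  · exact le_add_of_nonneg_right (hfill i j)

theorem _root_.Monovary.dotProduct_mulVec_le_of_mem_doublyStochastic {a b : n → R}
    (hab : Monovary a b) {P : Matrix n n R} (hP : P ∈ doublyStochastic R n) :
    a ⬝ᵥ (P *ᵥ b) ≤ a ⬝ᵥ b := by
  rw [← SetLike.mem_coe, doublyStochastic_eq_convexHull_permMatrix] at hP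
  refine convexHull_min (t := {M | a ⬝ᵥ (M *ᵥ b) ≤ a ⬝ᵥ b}) ?_ (convex_halfSpace_le ?_ _) hP
  · rintro _ ⟨σ, rfl⟩
    change a ⬝ᵥ (σ.permMatrix R *ᵥ b) ≤ a ⬝ᵥ b
    rw [permMatrix_mulVec]
    exact hab.sum_mul_comp_perm_le_sum_mul
  · exact ⟨fun M N => by rw [add_mulVec, dotProduct_add],
      fun t M => by rw [smul_mulVec, dotProduct_smul]⟩

theorem IsDoublySubstochastic.dotProduct_mulVec_le {Q : Matrix n n R}
    (hQ : Q.IsDoublySubstochastic) {a b : n → R} (ha : 0 ≤ a) (hb : 0 ≤ b) (hab : Monovary a b) :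
    a ⬝ᵥ (Q *ᵥ b) ≤ a ⬝ᵥ b := by
  obtain ⟨P, hP, hQP⟩ := hQ.exists_mem_doublyStochastic_le
  calc a ⬝ᵥ (Q *ᵥ b) ≤ a ⬝ᵥ (P *ᵥ b) :=
        dotProduct_le_dotProduct_of_nonneg_left
          (fun i => dotProduct_le_dotProduct_of_nonneg_right (hQP i) hb) ha
    _ ≤ a ⬝ᵥ b := hab.dotProduct_mulVec_le_of_mem_doublyStochastic hP

end Matrix

section InnerProduct

variable {F : Type*} [NormedAddCommGroup F] [InnerProductSpace ℝ F]

theorem norm_inv_norm_smul_le_one (x : F) : ‖‖x‖⁻¹ • x‖ ≤ 1 :=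
  mem_closedBall_zero_iff.1 (inv_norm_smul_mem_unitClosedBall x)

theorem real_inner_eq_norm_mul_norm_mul_inner_inv_norm_smul (x y : F) :
    ⟪x, y⟫ = ‖x‖ * ‖y‖ * ⟪‖x‖⁻¹ • x, ‖y‖⁻¹ • y⟫ := by
  rcases eq_or_ne x 0 with rfl | hx
  · simp
  rcases eq_or_ne y 0 with rfl | hy
  · simp
  rw [real_inner_smul_left, real_inner_smul_right]
  field_simp

/-- Members `y i = 0` normalise to `0` (as `‖0‖⁻¹ = 0`) and drop out of the sum; the rest form an
orthonormal family, to which Bessel's inequality applies. -/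
theorem sum_sq_real_inner_inv_norm_smul_le {ι : Type*} [Fintype ι] {y : ι → F}
    (hy : Pairwise fun i j => ⟪y i, y j⟫ = 0) (x : F) :
    ∑ i, ⟪‖y i‖⁻¹ • y i, x⟫ ^ 2 ≤ ‖x‖ ^ 2 := by
  classical
  have hon : Orthonormal ℝ fun i : {i // y i ≠ 0} => ‖y i‖⁻¹ • y i := by
    refine ⟨fun i => by simpa using norm_smul_inv_norm (𝕜 := ℝ) i.2, fun i j hij => ?_⟩
    simp [real_inner_smul_left, real_inner_smul_right, hy (Subtype.coe_injective.ne hij)]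
  calc ∑ i, ⟪‖y i‖⁻¹ • y i, x⟫ ^ 2 = ∑ i : {i // y i ≠ 0}, ⟪‖y i‖⁻¹ • y i, x⟫ ^ 2 := by
        rw [← Fintype.sum_subtype_add_sum_subtype (fun i => y i ≠ 0), add_eq_left]
        refine sum_eq_zero fun i _ => ?_
        simp [not_not.1 i.2]
    _ ≤ ‖x‖ ^ 2 := by simpa [sq_abs] using hon.sum_inner_products_le x (s := univ)

theorem exists_isDoublySubstochastic_sum_inner_le {E ι : Type*} [NormedAddCommGroup E]
    [InnerProductSpace ℝ E] [Fintype ι] (T S : E →ₗ[ℝ] F) (v w : OrthonormalBasis ι ℝ E)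
    (hT : Pairwise fun i j => ⟪T (v i), T (v j)⟫ = 0)
    (hS : Pairwise fun i j => ⟪S (w i), S (w j)⟫ = 0) :
    ∃ Q : Matrix ι ι ℝ, Q.IsDoublySubstochastic ∧
      ∑ i, ⟪T (v i), S (v i)⟫ ≤ (fun i => ‖T (v i)‖) ⬝ᵥ (Q *ᵥ fun j => ‖S (w j)‖) := by
  set x := fun i => ‖T (v i)‖⁻¹ • T (v i)
  set y := fun j => ‖S (w j)‖⁻¹ • S (w j)
  have hvw_col : ∀ j, ∑ i, ⟪v i, w j⟫ ^ 2 ≤ 1 := fun j => by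
    simpa [sq_abs] using v.orthonormal.sum_inner_products_le (w j) (s := univ)
  have hvw_row : ∀ i, ∑ j, ⟪v i, w j⟫ ^ 2 ≤ 1 := fun i => by
    simpa [sq_abs, real_inner_comm] using w.orthonormal.sum_inner_products_le (v i) (s := univ)
  have hxy_col : ∀ j, ∑ i, ⟪x i, y j⟫ ^ 2 ≤ 1 := fun j =>
    (sum_sq_real_inner_inv_norm_smul_le hT (y j)).trans
      (pow_le_one₀ (norm_nonneg _) (norm_inv_norm_smul_le_one _))
  have hxy_row : ∀ i, ∑ j, ⟪x i, y j⟫ ^ 2 ≤ 1 := fun i => by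
    simpa only [real_inner_comm (x i)] using (sum_sq_real_inner_inv_norm_smul_le hS (x i)).trans
      (pow_le_one₀ (norm_nonneg _) (norm_inv_norm_smul_le_one _))
  refine ⟨Matrix.of fun i j => (⟪v i, w j⟫ ^ 2 + ⟪x i, y j⟫ ^ 2) / 2,
    ⟨fun i j => by simp only [of_apply]; positivity, fun i => ?_, fun j => ?_⟩, ?_⟩
  · simp only [of_apply]
    rw [← sum_div, sum_add_distrib]; linarith [hvw_row i, hxy_row i]
  · simp only [of_apply]
    rw [← sum_div, sum_add_distrib]; linarith [hvw_col j, hxy_col j]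
  calc ∑ i, ⟪T (v i), S (v i)⟫ = ∑ i, ∑ j, ⟪v i, w j⟫ * ⟪T (v i), S (w j)⟫ := by
        refine sum_congr rfl fun i _ => ?_
        have hSv : S (v i) = ∑ j, ⟪w j, v i⟫ • S (w j) := by
          simp only [← map_smul, ← map_sum, w.sum_repr']
        simp only [hSv, inner_sum, real_inner_smul_right, real_inner_comm (v i)]
    _ ≤ ∑ i, ∑ j, ‖T (v i)‖ * ‖S (w j)‖ * ((⟪v i, w j⟫ ^ 2 + ⟪x i, y j⟫ ^ 2) / 2) := by
        refine sum_le_sum fun i _ => sum_le_sum fun j _ => ?_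
        rw [show ⟪T (v i), S (w j)⟫ = ‖T (v i)‖ * ‖S (w j)‖ * ⟪x i, y j⟫ from
          real_inner_eq_norm_mul_norm_mul_inner_inv_norm_smul _ _, mul_left_comm]
        exact mul_le_mul_of_nonneg_left (by linarith [two_mul_le_add_sq ⟪v i, w j⟫ ⟪x i, y j⟫])
          (by positivity)
    _ = _ := by
        simp only [dotProduct, mulVec, of_apply, mul_sum]
        refine sum_congr rfl fun i _ => sum_congr rfl fun j _ => by ring

end InnerProduct

namespace Matrix

theorem isHermitian_transpose_mul_self {m n : Type*} [Fintype m] (A : Matrix m n ℝ) :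
    (Aᵀ * A).IsHermitian := by
  simpa using isHermitian_conjTranspose_mul_self A

variable {m n : Type*} [Fintype m] [DecidableEq m] [Fintype n] [DecidableEq n]

theorem real_inner_toEuclideanLin_toEuclideanLin (A B : Matrix m n ℝ) (x y : EuclideanSpace ℝ n) :
    ⟪toEuclideanLin A x, toEuclideanLin B y⟫ = ⟪x, toEuclideanLin (Aᵀ * B) y⟫ := by
  rw [← LinearMap.adjoint_inner_right, ← toEuclideanLin_conjTranspose_eq_adjoint,
    conjTranspose_eq_transpose_of_trivial, toLpLin_mul_same, LinearMap.comp_apply]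

theorem trace_transpose_mul_eq_sum_inner (A B : Matrix m n ℝ)
    (v : OrthonormalBasis n ℝ (EuclideanSpace ℝ n)) :
    (Aᵀ * B).trace = ∑ i, ⟪toEuclideanLin A (v i), toEuclideanLin B (v i)⟫ := by
  simp only [real_inner_toEuclideanLin_toEuclideanLin]
  rw [← LinearMap.trace_eq_sum_inner, toEuclideanLin_eq_toLin_orthonormal, trace_toLin_eq]

theorem real_inner_toEuclideanLin_eigenvectorBasis (A : Matrix m n ℝ) (hA : (Aᵀ * A).IsHermitian)
    (i j : n) :
    ⟪toEuclideanLin A (hA.eigenvectorBasis i), toEuclideanLin A (hA.eigenvectorBasis j)⟫ =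
      if i = j then hA.eigenvalues i else 0 := by
  rw [real_inner_toEuclideanLin_toEuclideanLin, toLpLin_apply, hA.mulVec_eigenvectorBasis,
    WithLp.toLp_smul, WithLp.toLp_ofLp, real_inner_smul_right, hA.eigenvectorBasis.inner_eq_ite]
  split_ifs with h <;> simp [h]

theorem pairwise_real_inner_toEuclideanLin_eigenvectorBasis (A : Matrix m n ℝ)
    (hA : (Aᵀ * A).IsHermitian) :
    Pairwise fun i j =>
      ⟪toEuclideanLin A (hA.eigenvectorBasis i), toEuclideanLin A (hA.eigenvectorBasis j)⟫ = 0 :=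
  fun i j hij => (real_inner_toEuclideanLin_eigenvectorBasis A hA i j).trans (if_neg hij)

end Matrix

theorem svals_eq_norm {m n : ℕ} (A : Matrix (Fin m) (Fin n) ℝ) :
    svals A = fun i =>
      ‖toEuclideanLin A ((isHermitian_transpose_mul_self A).eigenvectorBasis i)‖ := by
  ext i
  rw [svals, ← Real.sqrt_sq (norm_nonneg _), ← real_inner_self_eq_norm_sq,
    real_inner_toEuclideanLin_eigenvectorBasis, if_pos rfl]

theorem antitone_svalsSorted {m n : ℕ} (A : Matrix (Fin m) (Fin n) ℝ) :
    Antitone (svalsSorted A) :=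
  fun _ _ hij => neg_le_neg_iff.1 (Tuple.monotone_sort (fun j => -svals A j) hij)

/-- Von Neumann's trace inequality:
`trace (Aᵀ B) ≤ Σ_i σ_i(A) σ_i(B)`, the singular values being in nonincreasing order. -/
theorem vonNeumann_trace_inequality {m n : ℕ} (A B : Matrix (Fin m) (Fin n) ℝ) :
    (Aᵀ * B).trace ≤ ∑ i, svalsSorted A i * svalsSorted B i := by
  have hA := isHermitian_transpose_mul_self A
  have hB := isHermitian_transpose_mul_self B
  obtain ⟨Q, hQ, hle⟩ := exists_isDoublySubstochastic_sum_inner_le (toEuclideanLin A)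
    (toEuclideanLin B) hA.eigenvectorBasis hB.eigenvectorBasis
    (pairwise_real_inner_toEuclideanLin_eigenvectorBasis A hA)
    (pairwise_real_inner_toEuclideanLin_eigenvectorBasis B hB)
  set π := Tuple.sort fun j => -svals A j
  set ρ := Tuple.sort fun j => -svals B j
  calc (Aᵀ * B).trace ≤ svals A ⬝ᵥ (Q *ᵥ svals B) := by
        rw [trace_transpose_mul_eq_sum_inner A B hA.eigenvectorBasis, svals_eq_norm, svals_eq_norm]
        exact hle
    _ = (svals A ∘ π) ⬝ᵥ (Q.submatrix π ρ *ᵥ (svals B ∘ ρ)) := by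
        rw [submatrix_mulVec_equiv, Function.comp_assoc, Equiv.self_comp_symm, Function.comp_id,
          comp_equiv_dotProduct_comp_equiv]
    _ ≤ svalsSorted A ⬝ᵥ svalsSorted B :=
        (hQ.submatrix π ρ).dotProduct_mulVec_le (fun _ => Real.sqrt_nonneg _)
          (fun _ => Real.sqrt_nonneg _)
          ((antitone_svalsSorted A).monovary (antitone_svalsSorted B))
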